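/- Let Y be a locally finite directed graph. The map sending a harmonic form f ∈ H(Y,ℂ) to the linear form on H_c^1(Y,ℂ) given by ω + dC_c^0(Y,ℂ) ↦ ⟨f, ω⟩ is well defined and is a linear isomorphism from H(Y,ℂ) onto the algebraic dual of H_c^1(Y,ℂ). -/

import Mathlib

open Function

/-- A directed graph: vertices, edges, head and tail maps. -/
structure DiGraph where
  V : Type
  E : Type
  head : E → V
  tail : E → V

namespace DiGraph

/-- A directed graph is locally finite if every vertex belongs to finitely many edges. -/
def LocallyFinite (Y : DiGraph) : Prop :=
  ∀ s : Y.V, {a : Y.E | Y.head a = s ∨ Y.tail a = s}.Finite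

/-- The coboundary `df` of a `0`-cochain `f`: `df(a) = f(a⁺) - f(a⁻)`. -/
def cobound (Y : DiGraph) (f : Y.V → ℂ) : Y.E → ℂ :=
  fun a => f (Y.head a) - f (Y.tail a)

/-- The map `d* : C¹(Y,ℂ) → C⁰(Y,ℂ)`,
`d*f(s) = Σ_{a : a⁺ = s} f(a) - Σ_{a : a⁻ = s} f(a)`. -/
noncomputable def dstar (Y : DiGraph) (f : Y.E → ℂ) : Y.V → ℂ :=
  fun s => (∑ᶠ a ∈ {a : Y.E | Y.head a = s}, f a) - ∑ᶠ a ∈ {a : Y.E | Y.tail a = s}, f a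

/-- The pairing `⟨f, g⟩ = Σ_x f(x) g(x)`. -/
noncomputable def pairing {α : Type} (f g : α → ℂ) : ℂ := ∑ᶠ x, f x * g x

/-- Finitely supported complex valued functions on `α`, as a subspace of all functions. -/
noncomputable def CcSub (α : Type) : Submodule ℂ (α → ℂ) where
  carrier := {f | (support f).Finite}
  add_mem' := fun hf hg => Set.Finite.subset (hf.union hg) (support_add _ _)
  zero_mem' := by simp
  smul_mem' := fun c f hf => Set.Finite.subset hf (support_const_smul_subset c f)

/-- The coboundary, as a linear map on finitely supported cochains (this uses
local finiteness of the graph). -/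
noncomputable def dcc (Y : DiGraph) (hY : Y.LocallyFinite) :
    CcSub Y.V →ₗ[ℂ] CcSub Y.E where
  toFun f := ⟨Y.cobound f.1, by
    have hsub : support (Y.cobound f.1) ⊆
        ⋃ s ∈ support f.1, {a : Y.E | Y.head a = s ∨ Y.tail a = s} := by
      intro a ha
      by_cases h : f.1 (Y.head a) = 0
      · have h' : f.1 (Y.tail a) ≠ 0 := by
          intro h''
          exact ha (by simp [cobound, h, h''])
        exact Set.mem_biUnion h' (Or.inr rfl)
      · exact Set.mem_biUnion h (Or.inl rfl)
    exact Set.Finite.subset (Set.Finite.biUnion f.2 (fun s _ => hY s)) hsub⟩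
  map_add' f g := by
    apply Subtype.ext
    funext a
    simp [cobound]
    ring
  map_smul' c f := by
    apply Subtype.ext
    funext a
    simp [cobound]
    ring

/-- The first cohomology space with compact support of the graph, defined as
finitely supported 1-cochains modulo coboundaries of finitely supported 0-cochains. -/
noncomputable abbrev Hc1 (Y : DiGraph) (hY : Y.LocallyFinite) :=
  ↥(CcSub Y.E) ⧸ LinearMap.range (Y.dcc hY)

/-- The space of harmonic forms `ker d*`. -/
noncomputable def HarmSub (Y : DiGraph) (hY : Y.LocallyFinite) : Submodule ℂ (Y.E → ℂ) where
  carrier := {f | ∀ s, Y.dstar f s = 0}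
  zero_mem' := by
    intro s
    simp [dstar]
  add_mem' := by
    intro f g hf hg s
    have h1 : {a : Y.E | Y.head a = s}.Finite := (hY s).subset (fun a ha => Or.inl ha)
    have h2 : {a : Y.E | Y.tail a = s}.Finite := (hY s).subset (fun a ha => Or.inr ha)
    have hf' := hf s
    have hg' := hg s
    simp only [dstar, Pi.add_apply] at hf' hg' ⊢
    rw [finsum_mem_add_distrib h1, finsum_mem_add_distrib h2]
    linear_combination hf' + hg'
  smul_mem' := by
    intro c f hf s
    have h1 : {a : Y.E | Y.head a = s}.Finite := (hY s).subset (fun a ha => Or.inl ha)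
    have h2 : {a : Y.E | Y.tail a = s}.Finite := (hY s).subset (fun a ha => Or.inr ha)
    have hf' := hf s
    simp only [dstar, Pi.smul_apply, smul_eq_mul] at hf' ⊢
    rw [finsum_mem_eq_finite_toFinset_sum _ h1, finsum_mem_eq_finite_toFinset_sum _ h2]
      at hf' ⊢
    rw [← Finset.mul_sum, ← Finset.mul_sum]
    linear_combination c * hf'

/-!
Finitely supported `1`-cochains form the free vector space on the edges, so `⟨·,·⟩` identifies
all `1`-cochains with the algebraic dual of `C_c¹(Y,ℂ)`. Summation by parts,
`⟨f, dg⟩ = ⟨d*f, g⟩`, tested against delta functions `g`, shows that `⟨f,·⟩` kills `dC_c⁰(Y,ℂ)`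
exactly when `d*f = 0`. So `H(Y,ℂ)` is identified with the annihilator of `dC_c⁰(Y,ℂ)`, which
is the dual of the quotient `H_c¹(Y,ℂ)`.
-/

section Pairing

variable {α β : Type}

lemma pairing_zero_left (g : α → ℂ) : pairing 0 g = 0 := by
  simp [pairing]

lemma pairing_sub_right (f : α → ℂ) {g h : α → ℂ} (hg : (support g).Finite)
    (hh : (support h).Finite) : pairing f (g - h) = pairing f g - pairing f h := by
  simp only [pairing, Pi.sub_apply, mul_sub]
  exact finsum_sub_distrib (hg.subset (support_mul_subset_right _ _))
    (hh.subset (support_mul_subset_right _ _))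

lemma pairing_sub_left {f g h : α → ℂ} (hh : (support h).Finite) :
    pairing (f - g) h = pairing f h - pairing g h := by
  simp only [pairing, Pi.sub_apply, sub_mul]
  exact finsum_sub_distrib (hh.subset (support_mul_subset_right _ _))
    (hh.subset (support_mul_subset_right _ _))

lemma pairing_single (f : α → ℂ) (a : α) : pairing f ⇑(Finsupp.single a 1) = f a := by
  classical
  rw [pairing, finsum_eq_single _ a fun x hx => by simp [Ne.symm hx]]
  simp

lemma finite_support_comp {v : β → α} (hv : ∀ s, {b | v b = s}.Finite) {g : α → ℂ}
    (hg : (support g).Finite) : (support (g ∘ v)).Finite := by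
  rw [support_comp_eq_preimage]
  exact hg.preimage' fun s _ => hv s

lemma pairing_comp {v : β → α} (hv : ∀ s, {b | v b = s}.Finite) (f : β → ℂ) {g : α → ℂ}
    (hg : (support g).Finite) :
    pairing f (g ∘ v) = pairing (fun s => ∑ᶠ b ∈ {b | v b = s}, f b) g := by
  classical
  set S := hg.toFinset
  set T := (finite_support_comp hv hg).toFinset
  have hfiber : ∀ s ∈ S, {b | v b = s} = ↑(T.filter (v · = s)) := by
    intro s hs
    ext b
    simp only [Set.mem_ofPred_eq, Finset.coe_filter, Set.Finite.mem_toFinset, S, T] at hs ⊢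
    constructor
    · rintro rfl; exact ⟨hs, rfl⟩
    · exact And.right
  calc pairing f (g ∘ v) = ∑ b ∈ T, f b * g (v b) :=
        finsum_eq_sum_of_support_subset _ fun b hb => by
          simpa [T] using right_ne_zero_of_mul hb
    _ = ∑ s ∈ S, ∑ b ∈ T with v b = s, f b * g (v b) :=
        (Finset.sum_fiberwise_of_maps_to (fun b hb => by simpa [S, T] using hb) _).symm
    _ = ∑ s ∈ S, (∑ᶠ b ∈ {b | v b = s}, f b) * g s := by
        refine Finset.sum_congr rfl fun s hs => ?_
        rw [hfiber s hs, finsum_mem_coe_finset, Finset.sum_mul]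
        exact Finset.sum_congr rfl fun b hb => by rw [(Finset.mem_filter.1 hb).2]
    _ = pairing (fun s => ∑ᶠ b ∈ {b | v b = s}, f b) g :=
        (finsum_eq_sum_of_support_subset _ fun s hs => by
          simpa [S] using right_ne_zero_of_mul hs).symm

variable (α) in
noncomputable def ccEquivFinsupp : CcSub α ≃ₗ[ℂ] (α →₀ ℂ) where
  toFun ω := Finsupp.ofSupportFinite ω ω.2
  invFun g := ⟨g, g.hasFiniteSupport⟩
  map_add' _ _ := Finsupp.ext fun _ => rfl
  map_smul' _ _ := Finsupp.ext fun _ => rfl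
  left_inv _ := rfl
  right_inv _ := Finsupp.ext fun _ => rfl

variable (α) in
noncomputable def pairingEquiv : (α → ℂ) ≃ₗ[ℂ] Module.Dual ℂ (CcSub α) :=
  (Finsupp.llift ℂ ℂ ℂ α).trans (ccEquivFinsupp α).dualMap

lemma pairingEquiv_apply (f : α → ℂ) (ω : CcSub α) :
    pairingEquiv α f ω = pairing f ω := by
  rw [pairingEquiv, LinearEquiv.trans_apply, LinearEquiv.dualMap_apply, Finsupp.llift_apply,
    Finsupp.lift_apply, Finsupp.sum, pairing,
    finsum_eq_sum_of_support_subset _ fun a ha => ?_]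
  · exact Finset.sum_congr rfl fun a _ => mul_comm _ _
  · exact Finsupp.mem_support_iff.2 (right_ne_zero_of_mul ha)

end Pairing

section Harmonic

variable {Y : DiGraph}

lemma finite_head_fiber (hY : Y.LocallyFinite) (s : Y.V) : {a | Y.head a = s}.Finite :=
  (hY s).subset fun _ => Or.inl

lemma finite_tail_fiber (hY : Y.LocallyFinite) (s : Y.V) : {a | Y.tail a = s}.Finite :=
  (hY s).subset fun _ => Or.inr

lemma pairing_cobound (hY : Y.LocallyFinite) (f : Y.E → ℂ) {g : Y.V → ℂ}
    (hg : (support g).Finite) : pairing f (Y.cobound g) = pairing (Y.dstar f) g := by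
  have hcobound : Y.cobound g = g ∘ Y.head - g ∘ Y.tail := rfl
  have hdstar : Y.dstar f = (fun s => ∑ᶠ a ∈ {a | Y.head a = s}, f a) -
      fun s => ∑ᶠ a ∈ {a | Y.tail a = s}, f a := rfl
  rw [hcobound, pairing_sub_right f (finite_support_comp (finite_head_fiber hY) hg)
      (finite_support_comp (finite_tail_fiber hY) hg),
    pairing_comp (finite_head_fiber hY) f hg, pairing_comp (finite_tail_fiber hY) f hg,
    hdstar, pairing_sub_left hg]

lemma mem_HarmSub_iff_pairing_cobound (hY : Y.LocallyFinite) (f : Y.E → ℂ) :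
    f ∈ Y.HarmSub hY ↔ ∀ g : CcSub Y.V, pairing f (Y.cobound g) = 0 := by
  constructor
  · intro hf g
    rw [pairing_cobound hY f g.2, show Y.dstar f = 0 from funext hf, pairing_zero_left]
  · intro hf s
    have := hf ⟨Finsupp.single s 1, (Finsupp.single s 1).hasFiniteSupport⟩
    rwa [pairing_cobound hY f (Finsupp.single s 1).hasFiniteSupport, pairing_single] at this

lemma map_HarmSub_pairingEquiv (hY : Y.LocallyFinite) :
    (Y.HarmSub hY).map (pairingEquiv Y.E : (Y.E → ℂ) →ₗ[ℂ] Module.Dual ℂ (CcSub Y.E)) =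
      (LinearMap.range (Y.dcc hY)).dualAnnihilator := by
  ext φ
  rw [Submodule.mem_map_equiv, mem_HarmSub_iff_pairing_cobound, Submodule.mem_dualAnnihilator]
  simp only [LinearMap.mem_range, forall_exists_index, forall_apply_eq_imp_iff]
  refine forall_congr' fun g => ?_
  rw [← LinearEquiv.apply_symm_apply (pairingEquiv Y.E) φ, pairingEquiv_apply,
    LinearEquiv.symm_apply_apply]
  rfl

variable (Y) in
noncomputable def harmonicDualEquiv (hY : Y.LocallyFinite) :
    Y.HarmSub hY ≃ₗ[ℂ] Module.Dual ℂ (Y.Hc1 hY) :=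
  ((pairingEquiv Y.E).ofSubmodules _ _ (map_HarmSub_pairingEquiv hY)).trans
    (Submodule.dualQuotEquivDualAnnihilator _).symm

end Harmonic

/-- For a locally finite directed graph `Y`, the map sending a
harmonic form `f ∈ H(Y,ℂ)` to the linear form `ω + dC_c⁰(Y,ℂ) ↦ ⟨f, ω⟩` on
`H_c¹(Y,ℂ)` is well defined (this is the content of the existence of `Φ` with the
stated property) and is a linear isomorphism from `H(Y,ℂ)` onto the algebraic dual
of `H_c¹(Y,ℂ)`. -/
theorem harmonic_iso_dual_Hc1 (Y : DiGraph) (hY : Y.LocallyFinite) :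
    ∃ Φ : ↥(Y.HarmSub hY) →ₗ[ℂ] Module.Dual ℂ (Y.Hc1 hY),
      (∀ (f : ↥(Y.HarmSub hY)) (ω : ↥(DiGraph.CcSub Y.E)),
        Φ f (Submodule.Quotient.mk ω) = DiGraph.pairing (f : Y.E → ℂ) (ω : Y.E → ℂ)) ∧
      Function.Bijective Φ := by
  refine ⟨harmonicDualEquiv Y hY, fun f ω => ?_, (harmonicDualEquiv Y hY).bijective⟩
  rw [LinearEquiv.coe_coe, harmonicDualEquiv, LinearEquiv.trans_apply,
    Submodule.dualQuotEquivDualAnnihilator_symm_apply_mk]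
  exact pairingEquiv_apply (f : Y.E → ℂ) ω

end DiGraph
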